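/- arXiv:1504.01291 — 3 statements merged into one kernel-verified Lean document; each statement's English description precedes it below -/
import Mathlib

section
/- The function h(x) = (λ β^α / Γ(α)) · (e^(-λx)/(1-e^(-λx))²) · (e^(-λx)/(1-e^(-λx)))^(α-1) · exp(-β e^(-λx)/(1-e^(-λx))) for x > 0 (and 0 otherwise) is a probability density function on ℝ, i.e., it is nonnegative and integrates to 1, for any α, β, λ > 0. -/
open Real MeasureTheory Set

/-!
With `G x = 1 - exp (-λ x)`, the odds `W = (1 - G) / G = (exp (λ x) - 1)⁻¹` map `(0, ∞)` strictly
decreasingly onto `(0, ∞)`, and `-W' = λ exp (-λ x) / (1 - exp (-λ x)) ^ 2`. The given function is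
`-W' · f_Γ(α, β) ∘ W`, with `f_Γ(α, β)` the Gamma density, so the substitution `u = W x` turns its
integral into the integral of the Gamma density over `(0, ∞)`, which is `1`.
-/

open ProbabilityTheory

noncomputable def expOdds (lam x : ℝ) : ℝ :=
  exp (-lam * x) / (1 - exp (-lam * x))

lemma expOdds_eq_inv (lam x : ℝ) : expOdds lam x = (exp (lam * x) - 1)⁻¹ := by
  rw [expOdds, neg_mul, exp_neg, div_eq_mul_inv, ← mul_inv, mul_sub, mul_one,
    mul_inv_cancel₀ (exp_pos _).ne']

lemma one_sub_exp_neg_mul_pos {lam x : ℝ} (hlam : 0 < lam) (hx : 0 < x) :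
    0 < 1 - exp (-lam * x) :=
  sub_pos.2 (exp_lt_one_iff.2 (by nlinarith))

lemma expOdds_pos {lam x : ℝ} (hlam : 0 < lam) (hx : 0 < x) : 0 < expOdds lam x :=
  div_pos (exp_pos _) (one_sub_exp_neg_mul_pos hlam hx)

lemma strictAntiOn_expOdds {lam : ℝ} (hlam : 0 < lam) : StrictAntiOn (expOdds lam) (Ioi 0) := by
  intro x (hx : 0 < x) y _ hxy
  have : 0 < exp (lam * x) - 1 := sub_pos.2 (one_lt_exp_iff.2 (mul_pos hlam hx))
  simp only [expOdds_eq_inv]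
  gcongr

lemma image_expOdds_Ioi {lam : ℝ} (hlam : 0 < lam) : expOdds lam '' Ioi 0 = Ioi 0 := by
  refine (image_subset_iff.2 fun x hx => expOdds_pos hlam hx).antisymm fun u (hu : 0 < u) => ?_
  have hinv : 1 < 1 + u⁻¹ := lt_add_of_pos_right 1 (inv_pos.2 hu)
  refine ⟨log (1 + u⁻¹) / lam, div_pos (log_pos hinv) hlam, ?_⟩
  beta_reduce
  rw [expOdds_eq_inv, mul_div_cancel₀ _ hlam.ne', exp_log (by linarith), add_sub_cancel_left,
    inv_inv]

lemma hasDerivAt_expOdds {lam x : ℝ} (h : 1 - exp (-lam * x) ≠ 0) :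
    HasDerivAt (expOdds lam) (-(lam * exp (-lam * x) / (1 - exp (-lam * x)) ^ 2)) x := by
  have hexp : HasDerivAt (fun x => exp (-lam * x)) (exp (-lam * x) * -lam) x := by
    simpa using ((hasDerivAt_id x).const_mul (-lam)).exp
  exact (hexp.div (hexp.const_sub 1) h).congr_deriv (by ring)

theorem integral_Ioi_comp_expOdds {E : Type*} [NormedAddCommGroup E] [NormedSpace ℝ E]
    {lam : ℝ} (hlam : 0 < lam) (g : ℝ → E) :
    ∫ x in Ioi 0, (lam * exp (-lam * x) / (1 - exp (-lam * x)) ^ 2) • g (expOdds lam x) =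
      ∫ u in Ioi 0, g u := by
  have hderiv : ∀ x ∈ Ioi (0 : ℝ), HasDerivWithinAt (expOdds lam)
      (-(lam * exp (-lam * x) / (1 - exp (-lam * x)) ^ 2)) (Ioi 0) x := fun x hx =>
    (hasDerivAt_expOdds (one_sub_exp_neg_mul_pos hlam hx).ne').hasDerivWithinAt
  simpa only [image_expOdds_Ioi hlam, neg_neg] using
    (integral_image_eq_integral_deriv_smul_of_antitoneOn measurableSet_Ioi hderiv
      (strictAntiOn_expOdds hlam).antitoneOn g).symm

lemma setIntegral_gammaPDFReal_Ioi {a r : ℝ} (ha : 0 < a) (hr : 0 < r) :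
    ∫ x in Ioi 0, gammaPDFReal a r x = 1 := by
  rw [setIntegral_congr_fun measurableSet_Ioi
    (g := fun x => r ^ a / Gamma a * (x ^ (a - 1) * exp (-(r * x))))
    (fun x (hx : 0 < x) => by simp only [gammaPDFReal, if_pos hx.le, mul_assoc]),
    integral_const_mul, integral_rpow_mul_exp_neg_mul_Ioi ha hr, div_rpow zero_le_one hr.le,
    one_rpow]
  have := (Gamma_pos_of_pos ha).ne'
  have := (rpow_pos_of_pos hr a).ne'
  field_simp

/-- The (1-Exp)/Exp Gamma density is a probability density function on ℝ. -/
theorem stmt_2 (α β lam : ℝ) (hα : 0 < α) (hβ : 0 < β) (hlam : 0 < lam) :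
    (∀ x : ℝ, 0 ≤ (if 0 < x then
        lam * β ^ α / Real.Gamma α *
          (Real.exp (-lam * x) / (1 - Real.exp (-lam * x)) ^ 2) *
          (Real.exp (-lam * x) / (1 - Real.exp (-lam * x))) ^ (α - 1) *
          Real.exp (-β * (Real.exp (-lam * x) / (1 - Real.exp (-lam * x))))
        else 0)) ∧
    (∫ x : ℝ, (if 0 < x then
        lam * β ^ α / Real.Gamma α *
          (Real.exp (-lam * x) / (1 - Real.exp (-lam * x)) ^ 2) *
          (Real.exp (-lam * x) / (1 - Real.exp (-lam * x))) ^ (α - 1) *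
          Real.exp (-β * (Real.exp (-lam * x) / (1 - Real.exp (-lam * x))))
        else 0)) = 1 := by
  have hdensity : ∀ x, 0 < x →
      lam * β ^ α / Real.Gamma α *
          (Real.exp (-lam * x) / (1 - Real.exp (-lam * x)) ^ 2) *
          (Real.exp (-lam * x) / (1 - Real.exp (-lam * x))) ^ (α - 1) *
          Real.exp (-β * (Real.exp (-lam * x) / (1 - Real.exp (-lam * x)))) =
        (lam * exp (-lam * x) / (1 - exp (-lam * x)) ^ 2) * gammaPDFReal α β (expOdds lam x) := by
    intro x hx
    rw [gammaPDFReal, if_pos (expOdds_pos hlam hx).le, expOdds, neg_mul β]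
    ring
  refine ⟨fun x => ?_, ?_⟩
  · split_ifs with hx
    · rw [hdensity x hx]
      exact mul_nonneg (by positivity) (gammaPDFReal_nonneg hα hβ _)
    · exact le_rfl
  · refine (integral_congr_ae (ae_of_all _ fun x => ?_)).trans <|
      (integral_indicator measurableSet_Ioi).trans <|
      (integral_Ioi_comp_expOdds hlam _).trans (setIntegral_gammaPDFReal_Ioi hα hβ)
    by_cases hx : 0 < x
    · rw [if_pos hx, indicator_of_mem (mem_Ioi.2 hx), smul_eq_mul, hdensity x hx]
    · rw [if_neg hx, indicator_of_notMem (mt mem_Ioi.1 hx)]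
end

section
/- For α, β, λ > 0 and x > 0, the density of the (1-Exp)/Exp Gamma distribution admits the absolutely convergent double-series expansion h(x) = ∑_{k=0}^∞ ∑_{j=0}^∞ C(-k-α-1, j) · ((-1)^(k+j) λ β^(k+α) / (k! Γ(α))) · e^(-λ(k+α+j)x), where C(-k-α-1, j) denotes the generalized binomial coefficient. -/
/-!
Put `u = e^{-λx} ∈ (0, 1)` and `c = λ β^α u^α / Γ(α)`. The `(k, j)` term factors as
`c (-βu)^k / k! · C(-k-α-1, j) (-u)^j`. For fixed `k` the `j`-series is the binomial series of
`(1 - u)^{-k-α-1}`, and its terms are nonnegative since `C(-r, j) (-1)^j = r(r+1)⋯(r+j-1)/j!`.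
What is left in `k` is an exponential series, summing to `c (1-u)^{-α-1} exp(-βu/(1-u)) = h(x)`.
Nonnegativity of the inner terms reduces absolute summability of the double series to the same
computation with `βu` in place of `-βu`, and then the double sum may be taken row by row.
-/

open Real

/-- Generalized binomial coefficient C(r, j) = r(r-1)···(r-j+1)/j!. -/
noncomputable def genBinom (r : ℝ) (j : ℕ) : ℝ :=
  (∏ i ∈ Finset.range j, (r - i)) / (Nat.factorial j)

open Nat

lemma genBinom_eq_choose (r : ℝ) (j : ℕ) : genBinom r j = Ring.choose r j := by
  rw [genBinom, Ring.choose_eq_smul, ← Polynomial.aeval_eq_smeval,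
    ← Polynomial.eval_map_algebraMap, descPochhammer_map, descPochhammer_eval_eq_prod_range,
    smul_eq_mul, div_eq_inv_mul]

lemma hasSum_genBinom_mul_pow {a y : ℝ} (hy : |y| < 1) :
    HasSum (fun j => genBinom a j * y ^ j) ((1 + y) ^ a) := by
  have hy' : y ∈ Metric.eball (0 : ℝ) 1 := by
    simpa [Real.enorm_eq_ofReal_abs] using hy
  simpa [genBinom_eq_choose, binomialSeries, mul_comm] using
    Real.one_add_rpow_hasFPowerSeriesOnBall_zero (a := a) |>.hasSum hy'

lemma genBinom_neg_mul_neg_pow_nonneg {r u : ℝ} (hr : 0 ≤ r) (hu : 0 ≤ u) (j : ℕ) :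
    0 ≤ genBinom (-r) j * (-u) ^ j := by
  have h : genBinom (-r) j * (-u) ^ j = (∏ i ∈ Finset.range j, (u * (r + i))) / j ! := by
    have hfactor :
        ∏ i ∈ Finset.range j, (u * (r + i)) = ∏ i ∈ Finset.range j, ((-r - i) * -u) :=
      Finset.prod_congr rfl fun i _ => by ring
    rw [genBinom, hfactor, Finset.prod_mul_distrib, Finset.prod_const, Finset.card_range]
    ring
  rw [h]
  positivity

lemma hasSum_pow_div_factorial_mul_rpow {v : ℝ} (hv : 0 < v) (q s : ℝ) :
    HasSum (fun k : ℕ => q ^ k / k ! * v ^ (-(k : ℝ) - s)) (v ^ (-s) * exp (q / v)) := by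
  rw [exp_eq_exp_ℝ]
  refine ((NormedSpace.expSeries_div_hasSum_exp (q / v)).mul_left (v ^ (-s))).congr_fun fun k => ?_
  rw [sub_eq_neg_add, rpow_add hv, rpow_neg hv.le, rpow_neg hv.le, rpow_natCast, div_pow]
  field_simp

lemma summable_abs_mul_pow_div_factorial_mul_rpow {v : ℝ} (hv : 0 < v) (c q s : ℝ) :
    Summable fun k : ℕ => |c * (q ^ k / k !)| * v ^ (-(k : ℝ) - s) := by
  refine ((hasSum_pow_div_factorial_mul_rpow hv |q| s).mul_left |c|).summable.congr fun k => ?_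
  rw [abs_mul, abs_div, abs_pow, Nat.abs_cast, mul_assoc]

section ProductSums

variable {ι κ : Type*} {a : ι → ℝ} {b : ι → κ → ℝ} {B : ι → ℝ}

theorem summable_abs_mul_of_hasSum_of_nonneg (hb : ∀ i j, 0 ≤ b i j)
    (hB : ∀ i, HasSum (b i) (B i)) (ha : Summable fun i => |a i| * B i) :
    Summable fun p : ι × κ => |a p.1 * b p.1 p.2| := by
  simp_rw [abs_mul, abs_of_nonneg (hb _ _)]
  refine (summable_prod_of_nonneg fun p => mul_nonneg (abs_nonneg _) (hb _ _)).mpr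
    ⟨fun i => ?_, ?_⟩
  · exact ((hB i).mul_left |a i|).summable
  · simpa only [((hB _).mul_left _).tsum_eq] using ha

theorem hasSum_mul_of_hasSum_of_nonneg (hb : ∀ i j, 0 ≤ b i j)
    (hB : ∀ i, HasSum (b i) (B i)) (ha : Summable fun i => |a i| * B i) {S : ℝ}
    (hS : HasSum (fun i => a i * B i) S) :
    HasSum (fun p : ι × κ => a p.1 * b p.1 p.2) S := by
  have hsum := (summable_abs_mul_of_hasSum_of_nonneg hb hB ha).of_abs.hasSum
  rwa [(hsum.prod_fiberwise fun i => (hB i).mul_left (a i)).unique hS] at hsum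

end ProductSums

lemma div_one_sub_sq_mul_div_one_sub_rpow {u : ℝ} (hu0 : 0 < u) (hu1 : u < 1) (α : ℝ) :
    u / (1 - u) ^ 2 * (u / (1 - u)) ^ (α - 1) = u ^ α * (1 - u) ^ (-(α + 1)) := by
  have hv : 0 < 1 - u := by linarith
  rw [div_rpow hu0.le hv.le, rpow_neg hv.le, rpow_sub hu0, rpow_add hv, rpow_sub hv, rpow_one,
    rpow_one]
  field_simp

lemma doubleSeries_term_eq_mul {α β lam x : ℝ} (hβ : 0 < β) (k j : ℕ) :
    genBinom (-(k : ℝ) - α - 1) j *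
        ((-1) ^ (k + j) * lam * β ^ ((k : ℝ) + α) / (k ! * Gamma α)) *
        exp (-lam * ((k : ℝ) + α + j) * x) =
      lam * β ^ α * exp (-lam * x) ^ α / Gamma α * ((-(β * exp (-lam * x))) ^ k / k !) *
        (genBinom (-(k : ℝ) - α - 1) j * (-exp (-lam * x)) ^ j) := by
  have hexp : exp (-lam * ((k : ℝ) + α + j) * x) =
      exp (-lam * x) ^ k * exp (-lam * x) ^ α * exp (-lam * x) ^ j := by
    rw [← rpow_natCast, ← rpow_natCast, ← rpow_add (exp_pos _), ← rpow_add (exp_pos _),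
      ← exp_mul]
    ring_nf
  rw [hexp, rpow_add hβ, rpow_natCast]
  field_simp
  ring

/-- The (1-Exp)/Exp Gamma density admits an absolutely convergent
double-series expansion. -/
theorem stmt_7 (α β lam x : ℝ) (hα : 0 < α) (hβ : 0 < β) (hlam : 0 < lam)
    (hx : 0 < x) :
    Summable (fun p : ℕ × ℕ =>
      |genBinom (-(p.1 : ℝ) - α - 1) p.2 *
        ((-1) ^ (p.1 + p.2) * lam * β ^ ((p.1 : ℝ) + α) /
          (Nat.factorial p.1 * Real.Gamma α)) *
        Real.exp (-lam * ((p.1 : ℝ) + α + p.2) * x)|) ∧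
    HasSum (fun p : ℕ × ℕ =>
      genBinom (-(p.1 : ℝ) - α - 1) p.2 *
        ((-1) ^ (p.1 + p.2) * lam * β ^ ((p.1 : ℝ) + α) /
          (Nat.factorial p.1 * Real.Gamma α)) *
        Real.exp (-lam * ((p.1 : ℝ) + α + p.2) * x))
      (lam * β ^ α / Real.Gamma α *
        (Real.exp (-lam * x) / (1 - Real.exp (-lam * x)) ^ 2) *
        (Real.exp (-lam * x) / (1 - Real.exp (-lam * x))) ^ (α - 1) *
        Real.exp (-β * (Real.exp (-lam * x) / (1 - Real.exp (-lam * x))))) := by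
  simp only [doubleSeries_term_eq_mul hβ]
  set u := exp (-lam * x)
  have hu0 : 0 < u := exp_pos _
  have hu1 : u < 1 := exp_lt_one_iff.mpr (by nlinarith)
  have hv : 0 < 1 - u := by linarith
  set c := lam * β ^ α * u ^ α / Gamma α
  let b (k j : ℕ) : ℝ := genBinom (-(k : ℝ) - α - 1) j * (-u) ^ j
  have hu : |-u| < 1 := by rwa [abs_neg, abs_of_pos hu0]
  have hrow (k : ℕ) : HasSum (b k) ((1 - u) ^ (-(k : ℝ) - (α + 1))) := by
    simpa [b, ← sub_eq_add_neg, sub_sub] using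
      hasSum_genBinom_mul_pow (a := -(k : ℝ) - α - 1) hu
  have hb (k j : ℕ) : 0 ≤ b k j := by
    convert genBinom_neg_mul_neg_pow_nonneg (r := k + α + 1) (by positivity) hu0.le j using 3
    ring
  let a (k : ℕ) : ℝ := c * ((-(β * u)) ^ k / k !)
  have habs := summable_abs_mul_pow_div_factorial_mul_rpow hv c (-(β * u)) (α + 1)
  have hsigned := (hasSum_pow_div_factorial_mul_rpow hv (-(β * u)) (α + 1)).mul_left c
  simp only [← mul_assoc] at hsigned
  refine ⟨summable_abs_mul_of_hasSum_of_nonneg (a := a) (b := b) hb hrow habs, ?_⟩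
  convert hasSum_mul_of_hasSum_of_nonneg (a := a) (b := b) hb hrow habs hsigned using 1
  rw [mul_assoc (lam * β ^ α / Gamma α), div_one_sub_sq_mul_div_one_sub_rpow hu0 hu1,
    show -β * (u / (1 - u)) = -(β * u) / (1 - u) by ring]
  ring
end

section
/- The quantile function of the (1-Exp)/Exp Gamma distribution is given by Q(p) = (1/λ)·log(1 + 1/Q_Γ(1-p)) for p ∈ (0,1), where Q_Γ is the quantile function of the Gamma(α, β) distribution; that is, H(Q(p)) = p for all p ∈ (0,1), for α, β, λ > 0. -/
/-!
The argument of `H` at `Q(p)` simplifies to `Q_Γ(1 - p)`, so `H(Q(p))` is the upper tail of the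
Gamma(α, β) density beyond its `(1 - p)`-quantile, which is `1 - (1 - p) = p` because the density
integrates to one over `(0, ∞)`.
-/

open Real MeasureTheory Set

section GammaDensity

variable {α β : ℝ}

lemma integrableOn_gammaDensity_Ioi (hα : 0 < α) (hβ : 0 < β) :
    IntegrableOn (fun s => β ^ α / Gamma α * s ^ (α - 1) * exp (-β * s)) (Ioi 0) := by
  have h := integrableOn_rpow_mul_exp_neg_mul_rpow (by linarith : -1 < α - 1) one_pos hβ
  simp only [rpow_one] at h
  simpa only [IntegrableOn, mul_assoc] using h.const_mul (β ^ α / Gamma α)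

lemma integral_gammaDensity_Ioi (hα : 0 < α) (hβ : 0 < β) :
    ∫ s in Ioi 0, β ^ α / Gamma α * s ^ (α - 1) * exp (-β * s) = 1 := by
  simp_rw [mul_assoc, neg_mul]
  rw [integral_const_mul, integral_rpow_mul_exp_neg_mul_Ioi hα hβ, div_rpow zero_le_one hβ.le,
    one_rpow]
  have := Gamma_pos_of_pos hα
  have := rpow_pos_of_pos hβ α
  field_simp

lemma integral_gammaDensity_Ioi_eq_one_sub (hα : 0 < α) (hβ : 0 < β) {q : ℝ} (hq : 0 ≤ q) :
    ∫ s in Ioi q, β ^ α / Gamma α * s ^ (α - 1) * exp (-β * s) =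
      1 - ∫ s in Ioc 0 q, β ^ α / Gamma α * s ^ (α - 1) * exp (-β * s) := by
  have h := intervalIntegral.integral_Ioi_sub_Ioi (integrableOn_gammaDensity_Ioi hα hβ) hq
  rw [integral_gammaDensity_Ioi hα hβ, intervalIntegral.integral_of_le hq] at h
  linarith

end GammaDensity

lemma exp_neg_div_one_sub_exp_neg_log_one_add_inv {lam q : ℝ} (hlam : lam ≠ 0) (hq : 0 < q) :
    exp (-lam * ((1 / lam) * log (1 + 1 / q))) /
      (1 - exp (-lam * ((1 / lam) * log (1 + 1 / q)))) = q := by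
  have hexp : exp (-lam * ((1 / lam) * log (1 + 1 / q))) = q / (q + 1) := by
    rw [show -lam * ((1 / lam) * log (1 + 1 / q)) = -log (1 + 1 / q) by field_simp,
      exp_neg, exp_log (by positivity)]
    field_simp
  rw [hexp]
  field_simp
  ring

/-- The quantile function of the (1-Exp)/Exp Gamma distribution:
Q(p) = (1/λ)·log(1 + 1/Q_Γ(1-p)) satisfies H(Q(p)) = p. -/
theorem stmt_19 (α β lam : ℝ) (QΓ : ℝ → ℝ) (hα : 0 < α) (hβ : 0 < β)
    (hlam : 0 < lam)
    (hQΓ : ∀ u ∈ Ioo (0:ℝ) 1, 0 < QΓ u ∧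
      (∫ s in Ioc (0:ℝ) (QΓ u),
        β ^ α / Real.Gamma α * s ^ (α - 1) * Real.exp (-β * s)) = u) :
    ∀ p ∈ Ioo (0:ℝ) 1,
      (∫ t in Ioi (Real.exp (-lam * ((1 / lam) * Real.log (1 + 1 / QΓ (1 - p)))) /
            (1 - Real.exp (-lam * ((1 / lam) * Real.log (1 + 1 / QΓ (1 - p)))))),
          β ^ α / Real.Gamma α * t ^ (α - 1) * Real.exp (-β * t)) = p := by
  intro p hp
  obtain ⟨hq, hcdf⟩ := hQΓ (1 - p) ⟨by linarith [hp.2], by linarith [hp.1]⟩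
  rw [exp_neg_div_one_sub_exp_neg_log_one_add_inv hlam.ne' hq,
    integral_gammaDensity_Ioi_eq_one_sub hα hβ hq.le, hcdf, sub_sub_cancel]
end
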